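/- Let d ≥ 8 be an integer that is a power of a prime number, and suppose that there is no MDS code over the alphabet Fin d of wordlength d+2 and combinatorial dimension ⌊(d+2)/2⌋ (this is an instance of the general MDS conjecture). Then an AME(d+1,d) state of minimal support exists and, for every integer n ≥ d+2, no AME(n,d) state of minimal support exists; that is, N(d) = d+1. -/

import Mathlib

/-!
The support of an AME(n, d) state of minimal support is an MDS code of length `n` and
combinatorial dimension `⌊n/2⌋`: the reduced density matrix on any `⌊n/2⌋` sites has a nonzero
diagonal, so the support projects onto all `d ^ ⌊n/2⌋` configurations of those sites, and by
counting it does so bijectively. Conversely, the uniform superposition over such a code is AME.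
For `n = d + 1` the extended Reed–Solomon code over the field with `d` elements is such a code.
For `n ≥ d + 2`, puncturing (`n` even) or shortening (`n` odd) lowers the length by one and keeps
the dimension equal to half the length, down to length `d + 2`, which the MDS conjecture forbids.
-/

open scoped BigOperators Classical

noncomputable section

namespace AMEPaper

/-- Combine a configuration on the complement of `B` with a configuration on `B`
into a full configuration on `Fin n`. -/
def combine {n d : ℕ} (B : Finset (Fin n)) (a : {i : Fin n // i ∉ B} → Fin d)
    (b : {i : Fin n // i ∈ B} → Fin d) : Fin n → Fin d :=
  fun i => if h : i ∈ B then b ⟨i, h⟩ else a ⟨i, h⟩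

/-- `ψ` is an absolutely maximally entangled state with `n` sites and local dimension `d`:
it is a unit vector and, for every set `B` of at most `n/2` sites, the reduced density
matrix on `B` equals `d ^ (-|B|)` times the identity. -/
def IsAME (n d : ℕ) (ψ : (Fin n → Fin d) → ℂ) : Prop :=
  (∑ s : Fin n → Fin d, ‖ψ s‖ ^ 2 = 1) ∧
  ∀ B : Finset (Fin n), B.card ≤ n / 2 →
    ∀ b b' : {i : Fin n // i ∈ B} → Fin d,
      (∑ a : {i : Fin n // i ∉ B} → Fin d,
          ψ (combine B a b) * (starRingEnd ℂ) (ψ (combine B a b'))) =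
        if b = b' then ((d : ℂ) ^ B.card)⁻¹ else 0

/-- `ψ` has minimal support: its support in the computational basis has exactly
`d ^ ⌊n/2⌋` elements. -/
def HasMinimalSupport (n d : ℕ) (ψ : (Fin n → Fin d) → ℂ) : Prop :=
  {s : Fin n → Fin d | ψ s ≠ 0}.ncard = d ^ (n / 2)

/-- `C` is an MDS code over the alphabet `Fin d` with wordlength `n` and minimum
Hamming distance `δ`: its minimum distance is exactly `δ` and it meets the Singleton
bound, `|C| = d ^ (n - δ + 1)`. -/
def IsMDSCode (d n δ : ℕ) (C : Finset (Fin n → Fin d)) : Prop :=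
  C.card = d ^ (n - δ + 1) ∧
  (∀ w ∈ C, ∀ w' ∈ C, w ≠ w' → δ ≤ hammingDist w w') ∧
  (∃ w ∈ C, ∃ w' ∈ C, w ≠ w' ∧ hammingDist w w' = δ)

/-- A latin `k`-hypercube of order `d`: fixing all indices but any one of them, the
resulting map `Fin d → Fin d` is a bijection. -/
def IsLatinHypercube (k d : ℕ) (L : (Fin k → Fin d) → Fin d) : Prop :=
  ∀ (i : Fin k) (x : Fin k → Fin d),
    Function.Bijective fun v : Fin d => L (Function.update x i v)

/-- Two latin `k`-hypercubes are orthogonal if for every pair of distinct indices and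
all ways of fixing the remaining indices, the two resulting latin squares are
orthogonal. -/
def AreOrthogonalHypercubes (k d : ℕ) (L M : (Fin k → Fin d) → Fin d) : Prop :=
  ∀ (i j : Fin k), i ≠ j → ∀ x : Fin k → Fin d,
    Function.Injective fun p : Fin d × Fin d =>
      (L (Function.update (Function.update x i p.1) j p.2),
       M (Function.update (Function.update x i p.1) j p.2))

/-- A latin square of order `d`: every row and every column is a bijection. -/
def IsLatinSquare (d : ℕ) (L : Fin d × Fin d → Fin d) : Prop :=
  (∀ i : Fin d, Function.Bijective fun j => L (i, j)) ∧
  (∀ j : Fin d, Function.Bijective fun i => L (i, j))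

section Codes

variable {ι ι' α : Type*}

def IsMDSOfDim [Fintype α] (k : ℕ) (C : Finset (ι → α)) : Prop :=
  C.card = Fintype.card α ^ k ∧
    ∀ c ∈ C, ∀ c' ∈ C, ∀ S : Finset ι, k ≤ S.card → (∀ i ∈ S, c i = c' i) → c = c'

variable [Fintype α]

theorem card_le_pow_card_of_eqOn_imp_eq {C : Finset (ι → α)} (T : Finset ι)
    (h : ∀ c ∈ C, ∀ c' ∈ C, (∀ i ∈ T, c i = c' i) → c = c') :
    C.card ≤ Fintype.card α ^ T.card := by
  calc C.card ≤ (Finset.univ : Finset (T → α)).card :=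
        Finset.card_le_card_of_injOn T.restrict (fun _ _ => Finset.mem_coe.2 (Finset.mem_univ _))
          fun c hc c' hc' hcc => h c hc c' hc' fun i hi => congrFun hcc ⟨i, hi⟩
    _ = Fintype.card α ^ T.card := by simp

variable {k : ℕ} {C : Finset (ι → α)}

theorem IsMDSOfDim.map_arrowCongr (hC : IsMDSOfDim k C) (e : ι ≃ ι') :
    IsMDSOfDim k (C.map (e.arrowCongr (Equiv.refl α)).toEmbedding) := by
  refine ⟨by rw [Finset.card_map, hC.1], ?_⟩
  simp only [Finset.mem_map_equiv]
  intro c hc c' hc' S hS hcc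
  refine (e.arrowCongr (Equiv.refl α)).symm.injective (hC.2 _ hc _ hc' (S.map e.symm.toEmbedding)
    (by rwa [Finset.card_map]) fun i hi => ?_)
  obtain ⟨j, hj, rfl⟩ := Finset.mem_map.1 hi
  simpa using hcc j hj

theorem isMDSOfDim_of_card_eq_of_forall_exists_restrict_eq (hcard : C.card = Fintype.card α ^ k)
    (hsurj : ∀ B : Finset ι, B.card = k → ∀ b : B → α, ∃ c ∈ C, B.restrict c = b) :
    IsMDSOfDim k C := by
  classical
  refine ⟨hcard, fun c hc c' hc' S hS hcc => ?_⟩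
  obtain ⟨B, hBS, hB⟩ := Finset.exists_subset_card_eq hS
  refine Finset.inj_on_of_surj_on_of_card_le (t := Finset.univ) (fun c _ => B.restrict c)
    (fun _ _ => Finset.mem_univ _)
    (fun b _ => by obtain ⟨c, hc, h⟩ := hsurj B hB b; exact ⟨c, hc, h⟩)
    (by simp [hcard, hB]) hc hc' (funext fun i => hcc i (hBS i.2))

variable [Fintype ι]

theorem IsMDSOfDim.card_filter_restrict_eq [DecidableEq α] (hC : IsMDSOfDim k C)
    (hk : k ≤ Fintype.card ι) {B : Finset ι} (hB : B.card ≤ k) (b : B → α) :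
    {c ∈ C | B.restrict c = b}.card = Fintype.card α ^ (k - B.card) := by
  classical
  obtain ⟨T, hTB, hT⟩ := Finset.exists_subset_card_eq (s := Bᶜ) (n := k - B.card)
    (by rw [Finset.card_compl]; omega)
  have hfiber : ∀ b : B → α, {c ∈ C | B.restrict c = b}.card ≤ Fintype.card α ^ (k - B.card) := by
    intro b
    rw [← hT]
    refine card_le_pow_card_of_eqOn_imp_eq T fun c hc c' hc' hcc => ?_
    simp only [Finset.mem_filter] at hc hc'
    refine hC.2 c hc.1 c' hc'.1 (B ∪ T) ?_ fun i hi => ?_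
    · rw [Finset.card_union_of_disjoint (Finset.subset_compl_iff_disjoint_left.1 hTB)]
      omega
    · rcases Finset.mem_union.1 hi with hi | hi
      · exact (congrFun hc.2 ⟨i, hi⟩).trans (congrFun hc'.2 ⟨i, hi⟩).symm
      · exact hcc i hi
  have hsum : ∑ b : B → α, {c ∈ C | B.restrict c = b}.card =
      ∑ _b : B → α, Fintype.card α ^ (k - B.card) := by
    rw [← Finset.card_eq_sum_card_fiberwise fun _ _ => Finset.mem_coe.2 (Finset.mem_univ _),
      hC.1, Finset.sum_const, Finset.card_univ, smul_eq_mul, Fintype.card_fun, Fintype.card_coe,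
      ← pow_add, Nat.add_sub_cancel' hB]
  exact (Finset.sum_eq_sum_iff_of_le fun b _ => hfiber b).1 hsum b (Finset.mem_univ _)

theorem IsMDSOfDim.puncture {C : Finset (Option ι → α)} (hC : IsMDSOfDim k C)
    (hk : k ≤ Fintype.card ι) : IsMDSOfDim k (C.image fun c => c ∘ some) := by
  have hsep : ∀ c ∈ C, ∀ c' ∈ C, ∀ S : Finset ι, k ≤ S.card →
      (∀ i ∈ S, c (some i) = c' (some i)) → c = c' := fun c hc c' hc' S hS hcc =>
    hC.2 c hc c' hc' (S.map .some) (by rwa [Finset.card_map]) fun i hi => by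
      obtain ⟨j, hj, rfl⟩ := Finset.mem_map.1 hi
      exact hcc j hj
  have hinj : Set.InjOn (fun c : Option ι → α => c ∘ some) C := fun c hc c' hc' hcc =>
    hsep c hc c' hc' Finset.univ (by simpa using hk) fun i _ => congrFun hcc i
  refine ⟨by rw [Finset.card_image_of_injOn hinj, hC.1], ?_⟩
  simp only [Finset.mem_image]
  rintro _ ⟨c, hc, rfl⟩ _ ⟨c', hc', rfl⟩ S hS hcc
  rw [hsep c hc c' hc' S hS hcc]

theorem IsMDSOfDim.shorten {C : Finset (Option ι → α)}
    (hC : IsMDSOfDim (k + 1) C) (hk : k ≤ Fintype.card ι) (v : α) :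
    IsMDSOfDim k ({c ∈ C | c none = v}.image fun c => c ∘ some) := by
  have hsep : ∀ c ∈ {c ∈ C | c none = v}, ∀ c' ∈ {c ∈ C | c none = v}, ∀ S : Finset ι,
      k ≤ S.card → (∀ i ∈ S, c (some i) = c' (some i)) → c = c' := by
    intro c hc c' hc' S hS hcc
    simp only [Finset.mem_filter] at hc hc'
    refine hC.2 c hc.1 c' hc'.1 (Finset.insertNone S) (by simpa using hS) fun i hi => ?_
    cases i with
    | none => exact hc.2.trans hc'.2.symm
    | some i => exact hcc i (Finset.some_mem_insertNone.1 hi)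
  have hinj : Set.InjOn (fun c : Option ι → α => c ∘ some) ({c ∈ C | c none = v} : Finset _) :=
    fun c hc c' hc' hcc =>
      hsep c hc c' hc' Finset.univ (by simpa using hk) fun i _ => congrFun hcc i
  refine ⟨?_, ?_⟩
  · rw [Finset.card_image_of_injOn hinj]
    have hfilter : {c ∈ C | c none = v} =
        {c ∈ C | ({none} : Finset (Option ι)).restrict c = fun _ => v} := by
      refine Finset.filter_congr fun c _ => ⟨fun h => funext fun i => ?_, fun h => ?_⟩
      · obtain ⟨_, hi⟩ := i
        obtain rfl := Finset.mem_singleton.1 hi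
        exact h
      · exact congrFun h ⟨none, Finset.mem_singleton_self _⟩
    rw [hfilter, hC.card_filter_restrict_eq (by simpa using hk) (by simp)]
    simp
  · simp only [Finset.mem_image]
    rintro _ ⟨c, hc, rfl⟩ _ ⟨c', hc', rfl⟩ S hS hcc
    rw [hsep c hc c' hc' S hS hcc]

end Codes

section Distance

variable {ι α : Type*} [Fintype ι] [DecidableEq α]

theorem hammingDist_le_card_sub_of_eqOn {c c' : ι → α} {T : Finset ι}
    (h : ∀ i ∈ T, c i = c' i) : hammingDist c c' ≤ Fintype.card ι - T.card := by
  classical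
  rw [← Finset.card_compl]
  exact Finset.card_le_card fun i hi => Finset.mem_compl.2 fun hiT =>
    (Finset.mem_filter.1 hi).2 (h i hiT)

variable [Fintype α] {k : ℕ} {C : Finset (ι → α)}

theorem IsMDSOfDim.le_hammingDist (hC : IsMDSOfDim k C) {c c' : ι → α} (hc : c ∈ C)
    (hc' : c' ∈ C) (hne : c ≠ c') : Fintype.card ι - k + 1 ≤ hammingDist c c' := by
  classical
  set A : Finset ι := {i | c i = c' i}
  have hA : A.card < k := lt_of_not_ge fun hA => hne (hC.2 c hc c' hc' A hA fun i hi =>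
    (Finset.mem_filter.1 hi).2)
  have hdist : hammingDist c c' = Fintype.card ι - A.card := by
    rw [← Finset.card_compl, Finset.compl_filter]
    rfl
  have := A.card_le_univ
  have := hammingDist_pos.2 hne
  omega

theorem IsMDSOfDim.exists_hammingDist_le (hC : IsMDSOfDim k C) (hα : 2 ≤ Fintype.card α)
    (hk : 1 ≤ k) (hkι : k ≤ Fintype.card ι) :
    ∃ c ∈ C, ∃ c' ∈ C, c ≠ c' ∧ hammingDist c c' ≤ Fintype.card ι - k + 1 := by
  classical
  obtain ⟨T, -, hT⟩ := Finset.exists_subset_card_eq (s := (Finset.univ : Finset ι)) (n := k - 1)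
    (by simp; omega)
  have hlt : (Finset.univ : Finset (T → α)).card < C.card := by
    rw [hC.1, Finset.card_univ, Fintype.card_fun, Fintype.card_coe, hT]
    exact Nat.pow_lt_pow_right hα (by omega)
  obtain ⟨c, hc, c', hc', hne, hcc⟩ :=
    Finset.exists_ne_map_eq_of_card_lt_of_maps_to hlt (f := T.restrict) fun _ _ => by simp
  refine ⟨c, hc, c', hc', hne, ?_⟩
  calc hammingDist c c' ≤ Fintype.card ι - T.card :=
        hammingDist_le_card_sub_of_eqOn fun i hi => congrFun hcc ⟨i, hi⟩
    _ = Fintype.card ι - k + 1 := by omega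

end Distance

theorem IsMDSOfDim.isMDSCode {d n k : ℕ} {C : Finset (Fin n → Fin d)} (hC : IsMDSOfDim k C)
    (hd : 2 ≤ d) (hk : 1 ≤ k) (hkn : k ≤ n) : IsMDSCode d n (n - k + 1) C := by
  refine ⟨by rw [hC.1, Fintype.card_fin]; congr 1; omega, fun c hc c' hc' hne => ?_, ?_⟩
  · simpa using hC.le_hammingDist hc hc' hne
  · obtain ⟨c, hc, c', hc', hne, hle⟩ :=
      hC.exists_hammingDist_le (by simpa using hd) hk (by simpa using hkn)
    exact ⟨c, hc, c', hc', hne,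
      le_antisymm (by simpa using hle) (by simpa using hC.le_hammingDist hc hc' hne)⟩

theorem exists_isMDSOfDim_half_of_succ {α : Type*} [Fintype α] [Nonempty α] {n : ℕ}
    (h : ∃ C : Finset (Fin (n + 1) → α), IsMDSOfDim ((n + 1) / 2) C) :
    ∃ C : Finset (Fin n → α), IsMDSOfDim (n / 2) C := by
  obtain ⟨C, hC⟩ := h
  have hC' := hC.map_arrowCongr (finSuccEquiv n)
  rcases Nat.even_or_odd n with ⟨m, rfl⟩ | ⟨m, rfl⟩
  · rw [show (m + m + 1) / 2 = (m + m) / 2 by omega] at hC'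
    exact ⟨_, hC'.puncture (by simp; omega)⟩
  · rw [show (2 * m + 1 + 1) / 2 = (2 * m + 1) / 2 + 1 by omega] at hC'
    exact ⟨_, hC'.shorten (by simp; omega) (Classical.arbitrary α)⟩

theorem exists_isMDSOfDim_half_of_le {α : Type*} [Fintype α] [Nonempty α] {m n : ℕ}
    (hmn : m ≤ n) (h : ∃ C : Finset (Fin n → α), IsMDSOfDim (n / 2) C) :
    ∃ C : Finset (Fin m → α), IsMDSOfDim (m / 2) C := by
  induction n, hmn using Nat.le_induction with
  | base => exact h
  | succ n _ ih => exact ih (exists_isMDSOfDim_half_of_succ h)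

section UniformState

variable {β : Type*} (C : Finset β)

def uniformState (s : β) : ℂ :=
  if s ∈ C then ((√(C.card : ℝ))⁻¹ : ℝ) else 0

theorem uniformState_ne_zero_iff {s : β} : uniformState C s ≠ 0 ↔ s ∈ C := by
  by_cases hs : s ∈ C
  · have : (C.card : ℝ) ≠ 0 := by exact_mod_cast (Finset.card_pos.2 ⟨s, hs⟩).ne'
    simp [uniformState, hs, this]
  · simp [uniformState, hs]

theorem uniformState_mul_conj (s s' : β) :
    uniformState C s * starRingEnd ℂ (uniformState C s') =
      if s ∈ C ∧ s' ∈ C then ((C.card : ℂ))⁻¹ else 0 := by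
  by_cases hs : s ∈ C <;> by_cases hs' : s' ∈ C <;> simp only [uniformState, hs, hs', if_true,
    if_false, and_true, and_false, zero_mul, mul_zero, map_zero, Complex.conj_ofReal]
  rw [← Complex.ofReal_mul, ← mul_inv, Real.mul_self_sqrt (Nat.cast_nonneg _)]
  push_cast
  rfl

theorem sum_norm_sq_uniformState [Fintype β] (hC : C.Nonempty) :
    ∑ s, ‖uniformState C s‖ ^ 2 = 1 := by
  have hcard : (C.card : ℝ) ≠ 0 := by exact_mod_cast hC.card_pos.ne'
  have hterm : ∀ s, ‖uniformState C s‖ ^ 2 = if s ∈ C then (C.card : ℝ)⁻¹ else 0 := by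
    intro s
    by_cases hs : s ∈ C
    · simp [uniformState, hs, inv_pow, Real.sq_sqrt (Nat.cast_nonneg _)]
    · simp [uniformState, hs]
  simp [hterm, Finset.sum_ite_mem, hcard]

end UniformState

theorem restrict_combine {n d : ℕ} (B : Finset (Fin n)) (a : {i : Fin n // i ∉ B} → Fin d)
    (b : {i : Fin n // i ∈ B} → Fin d) : B.restrict (combine B a b) = b :=
  funext fun i => by simp [Finset.restrict, combine, i.2]

theorem combine_restrict {n d : ℕ} {B : Finset (Fin n)} {c : Fin n → Fin d}
    {b : {i : Fin n // i ∈ B} → Fin d} (h : B.restrict c = b) : combine B (fun i => c i) b = c := by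
  subst h
  funext i
  by_cases hi : i ∈ B <;> simp [combine, Finset.restrict, hi]

theorem card_filter_combine_mem {n d : ℕ} (C : Finset (Fin n → Fin d)) (B : Finset (Fin n))
    (b : {i : Fin n // i ∈ B} → Fin d) :
    (Finset.univ.filter fun a => combine B a b ∈ C).card = {c ∈ C | B.restrict c = b}.card := by
  refine Finset.card_nbij' (fun a => combine B a b) (fun c i => c i) (fun a ha => ?_)
    (fun c hc => ?_) (fun a _ => funext fun i => by simp [combine, i.2]) (fun c hc => ?_)
  · simpa [restrict_combine] using ha
  · simp only [Finset.coe_filter, Finset.mem_univ, true_and] at hc ⊢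
    rw [Set.mem_ofPred, combine_restrict hc.2]
    exact hc.1
  · exact combine_restrict (Finset.mem_filter.1 hc).2

theorem IsMDSOfDim.isAME_uniformState {n d : ℕ} (hd : d ≠ 0) {C : Finset (Fin n → Fin d)}
    (hC : IsMDSOfDim (n / 2) C) : IsAME n d (uniformState C) := by
  have hcard : C.card = d ^ (n / 2) := by simpa using hC.1
  refine ⟨sum_norm_sq_uniformState C (Finset.card_pos.1 (by rw [hcard]; positivity)),
    fun B hB b b' => ?_⟩
  simp_rw [uniformState_mul_conj]
  split_ifs with hbb
  · subst hbb
    simp only [and_self]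
    rw [Finset.sum_ite, Finset.sum_const_zero, add_zero, Finset.sum_const, nsmul_eq_mul,
      card_filter_combine_mem, hC.card_filter_restrict_eq (by simp; omega) hB b, hcard,
      Fintype.card_fin]
    push_cast
    rw [pow_sub₀ _ (Nat.cast_ne_zero.2 hd) hB]
    field_simp
  · refine Finset.sum_eq_zero fun a _ => if_neg fun ⟨h, h'⟩ => hbb ?_
    -- both words agree on the `n - |B| ≥ n / 2` sites outside `B`
    rw [← restrict_combine B a b, ← restrict_combine B a b',
      hC.2 _ h _ h' Bᶜ (by rw [Finset.card_compl, Fintype.card_fin]; omega)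
        fun i hi => by simp [combine, Finset.mem_compl.1 hi]]

theorem IsMDSOfDim.hasMinimalSupport_uniformState {n d : ℕ} {C : Finset (Fin n → Fin d)}
    (hC : IsMDSOfDim (n / 2) C) : HasMinimalSupport n d (uniformState C) := by
  have : {s | uniformState C s ≠ 0} = (C : Set (Fin n → Fin d)) := by
    ext s
    exact uniformState_ne_zero_iff C
  rw [HasMinimalSupport, this, Set.ncard_coe_finset]
  simpa using hC.1

theorem IsAME.exists_restrict_eq {n d : ℕ} (hd : d ≠ 0) {ψ : (Fin n → Fin d) → ℂ}
    (hψ : IsAME n d ψ) {B : Finset (Fin n)} (hB : B.card ≤ n / 2)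
    (b : {i : Fin n // i ∈ B} → Fin d) : ∃ s, ψ s ≠ 0 ∧ B.restrict s = b := by
  have hdiag := hψ.2 B hB b b
  rw [if_pos rfl] at hdiag
  obtain ⟨a, -, ha⟩ := Finset.exists_ne_zero_of_sum_ne_zero
    (hdiag ▸ inv_ne_zero (pow_ne_zero _ (Nat.cast_ne_zero.2 hd)))
  exact ⟨combine B a b, left_ne_zero_of_mul ha, restrict_combine B a b⟩

theorem IsAME.isMDSOfDim_support {n d : ℕ} (hd : d ≠ 0) {ψ : (Fin n → Fin d) → ℂ}
    (hψ : IsAME n d ψ) (hmin : HasMinimalSupport n d ψ) :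
    IsMDSOfDim (n / 2) {s | ψ s ≠ 0} := by
  refine isMDSOfDim_of_card_eq_of_forall_exists_restrict_eq ?_ fun B hB b => ?_
  · rw [Fintype.card_fin, ← hmin, ← Set.ncard_coe_finset, Finset.coe_filter]
    simp
  · obtain ⟨s, hs, hsb⟩ := hψ.exists_restrict_eq hd hB.le b
    exact ⟨s, by simpa using hs, hsb⟩

section ExtendedReedSolomon

open Polynomial

variable {F : Type*} [Field F] {k : ℕ}

/-- `none` is the point at infinity, where the codeword records the coefficient of
`X ^ (k - 1)`. -/
def extendedRSWord (k : ℕ) (p : F[X]) : Option F → F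
  | none => p.coeff (k - 1)
  | some a => p.eval a

theorem degree_sub_lt_card_eraseNone {p q : F[X]} (hp : p ∈ F[X]_k) (hq : q ∈ F[X]_k)
    {S : Finset (Option F)} (hS : k ≤ S.card)
    (h : ∀ x ∈ S, extendedRSWord k p x = extendedRSWord k q x) :
    (p - q).degree < S.eraseNone.card := by
  have hpq : (p - q).degree < k := mem_degreeLT.1 (Submodule.sub_mem _ hp hq)
  by_cases hnone : none ∈ S
  · have htop : (p - q).degree < ↑(k - 1) := by
      refine (degree_lt_iff_coeff_zero _ _).2 fun m hm => ?_
      rcases hm.eq_or_lt with rfl | hm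
      · simpa [sub_eq_zero, extendedRSWord] using h none hnone
      · exact coeff_eq_zero_of_degree_lt (hpq.trans_le (by exact_mod_cast (by omega : k ≤ m)))
    refine htop.trans_le ?_
    rw [Finset.card_eraseNone_of_mem hnone]
    exact_mod_cast (by omega : k - 1 ≤ S.card - 1)
  · rw [Finset.card_eraseNone_of_not_mem hnone]
    exact hpq.trans_le (by exact_mod_cast hS)

theorem eq_of_extendedRSWord_eqOn {p q : F[X]} (hp : p ∈ F[X]_k) (hq : q ∈ F[X]_k)
    {S : Finset (Option F)} (hS : k ≤ S.card)
    (h : ∀ x ∈ S, extendedRSWord k p x = extendedRSWord k q x) : p = q :=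
  eq_of_degree_sub_lt_of_eval_finset_eq _ (degree_sub_lt_card_eraseNone hp hq hS h)
    fun a ha => h (some a) (Finset.mem_eraseNone.1 ha)

variable [Fintype F]

variable (F) in
def extendedRSCode (k : ℕ) : Finset (Option F → F) :=
  Finset.univ.image fun u : Fin k → F => extendedRSWord k ((degreeLTEquiv F k).symm u : F[X])

theorem isMDSOfDim_extendedRSCode (hk : k ≤ Fintype.card F + 1) :
    IsMDSOfDim k (extendedRSCode F k) := by
  classical
  have hsep : ∀ u u' : Fin k → F, ∀ S : Finset (Option F), k ≤ S.card →
      (∀ x ∈ S, extendedRSWord k ((degreeLTEquiv F k).symm u : F[X]) x =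
        extendedRSWord k ((degreeLTEquiv F k).symm u' : F[X]) x) → u = u' :=
    fun u u' S hS h => (degreeLTEquiv F k).symm.injective
      (Subtype.ext (eq_of_extendedRSWord_eqOn (Subtype.mem _) (Subtype.mem _) hS h))
  refine ⟨?_, ?_⟩
  · rw [extendedRSCode, Finset.card_image_of_injective _ fun u u' h =>
      hsep u u' Finset.univ (by simpa using hk) fun x _ => congrFun h x]
    simp
  · simp only [extendedRSCode, Finset.mem_image, Finset.mem_univ, true_and]
    rintro _ ⟨u, rfl⟩ _ ⟨u', rfl⟩ S hS h
    rw [hsep u u' S hS h]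

end ExtendedReedSolomon

theorem exists_isMDSOfDim_of_isPrimePow {q k : ℕ} (hq : IsPrimePow q) (hk : k ≤ q + 1) :
    ∃ C : Finset (Fin (q + 1) → Fin q), IsMDSOfDim k C := by
  obtain ⟨_⟩ : Nonempty (Field (Fin q)) := Fintype.nonempty_field_iff.2 (by simpa using hq)
  exact ⟨_, (isMDSOfDim_extendedRSCode (by simpa using hk)).map_arrowCongr (finSuccEquiv q).symm⟩

/-- Let `d ≥ 8` be a prime power and assume the relevant instance of the general MDS
conjecture: there is no MDS code over `Fin d` of wordlength `d + 2` and combinatorial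
dimension `⌊(d+2)/2⌋` (equivalently, minimum distance `d + 2 - ⌊(d+2)/2⌋ + 1`). Then
`𝒩(d) = d + 1`. -/
theorem N_eq_d_plus_one_of_mds_conjecture (d : ℕ) (hd : 8 ≤ d) (hp : IsPrimePow d)
    (hMDS : ¬ ∃ C : Finset (Fin (d + 2) → Fin d),
      IsMDSCode d (d + 2) (d + 2 - (d + 2) / 2 + 1) C) :
    (∃ ψ : (Fin (d + 1) → Fin d) → ℂ,
        IsAME (d + 1) d ψ ∧ HasMinimalSupport (d + 1) d ψ) ∧
    (∀ n : ℕ, d + 2 ≤ n →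
      ¬ ∃ ψ : (Fin n → Fin d) → ℂ, IsAME n d ψ ∧ HasMinimalSupport n d ψ) := by
  refine ⟨?_, fun n hn ⟨ψ, hψ, hmin⟩ => ?_⟩
  · obtain ⟨C, hC⟩ := exists_isMDSOfDim_of_isPrimePow hp (k := (d + 1) / 2) (by omega)
    exact ⟨_, hC.isAME_uniformState (by omega), hC.hasMinimalSupport_uniformState⟩
  · have : Nonempty (Fin d) := ⟨⟨0, by omega⟩⟩
    obtain ⟨C, hC⟩ := exists_isMDSOfDim_half_of_le hn ⟨_, hψ.isMDSOfDim_support (by omega) hmin⟩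
    exact hMDS ⟨C, hC.isMDSCode (by omega) (by omega) (by omega)⟩

end AMEPaper
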